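/- arXiv:2005.02194 — 2 statements merged into one kernel-verified Lean document; each statement's English description precedes it below -/
import Mathlib

section
/- Let M be a (2n+1)-dimensional N(k)-contact metric manifold admitting a *-conformal Ricci soliton (g,V,λ). Then η(£_V ξ) = -[λ - (p/2 + 1/(2n+1))]. -/
noncomputable section

/-!
An abstract algebraic model of a `(2n+1)`-dimensional `N(k)`-contact metric manifold
`(M, φ, ξ, η, g)`.  Here `F` plays the role of the ring of smooth functions `C^∞(M)`
and `V` plays the role of the `C^∞(M)`-module of smooth vector fields on `M`;
`vact X f` is the derivation action `X f`, `bracket` is the Lie bracket of vector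
fields, `nabla` is the Levi-Civita connection and `R` its Riemann curvature tensor
`R(X,Y)Z` (bundled as an `F`-linear map in `Z`, so that pointwise traces of
`(1,1)`-tensor fields can be expressed by `LinearMap.trace F V`).
The contact form is `η(X) = g(X,ξ)`, the tensor `h` is `(1/2)£_ξ φ`, and the contact
metric condition `g(φX, Y) = dη(X,Y)` uses Blair's convention
`dη(X,Y) = (1/2)(X η(Y) - Y η(X) - η([X,Y]))`.  The `N(k)`-nullity condition is
`R(X,Y)ξ = k[η(Y)X - η(X)Y]`, and `Qstar` is the `*`-Ricci operator, characterized by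
`g(Q*X, Y) = S*(X,Y) = (1/2) trace (Z ↦ φ (R(X, φY) Z))`.
-/
structure NkContactMetric (F : Type*) [CommRing F] [Algebra ℝ F]
    (V : Type*) [AddCommGroup V] [Module F V] [Module ℝ V] [IsScalarTower ℝ F V]
    (n : ℕ) (k : ℝ) where
  g : V →ₗ[F] V →ₗ[F] F
  phi : V →ₗ[F] V
  xi : V
  h : V →ₗ[F] V
  bracket : V → V → V
  vact : V → F → F
  nabla : V → V → V
  R : V → V → V →ₗ[F] V
  Qstar : V → V
  npos : 0 < n
  dim : Module.finrank F V = 2 * n + 1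
  free : Module.Free F V
  finite : Module.Finite F V
  g_symm : ∀ X Y, g X Y = g Y X
  phi_sq : ∀ X, phi (phi X) = -X + g X xi • xi
  xi_unit : g xi xi = 1
  phi_xi : phi xi = 0
  eta_phi : ∀ X, g (phi X) xi = 0
  phi_compat : ∀ X Y, g (phi X) (phi Y) = g X Y - g X xi * g Y xi
  contact : ∀ X Y, g (phi X) Y =
    (1/2 : ℝ) • (vact X (g Y xi) - vact Y (g X xi) - g (bracket X Y) xi)
  h_def : ∀ X, h X = (1/2 : ℝ) • (bracket xi (phi X) - phi (bracket xi X))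
  nullity : ∀ X Y, R X Y xi = k • (g Y xi • X - g X xi • Y)
  torsion_free : ∀ X Y, nabla X Y - nabla Y X = bracket X Y
  metric_compat : ∀ X Y Z, vact Z (g X Y) = g (nabla Z X) Y + g X (nabla Z Y)
  nabla_add₁ : ∀ X Y Z, nabla (X + Y) Z = nabla X Z + nabla Y Z
  nabla_smul₁ : ∀ (f : F) (X Y : V), nabla (f • X) Y = f • nabla X Y
  nabla_add₂ : ∀ X Y Z, nabla X (Y + Z) = nabla X Y + nabla X Z
  nabla_leibniz : ∀ (X : V) (f : F) (Y : V), nabla X (f • Y) = vact X f • Y + f • nabla X Y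
  vact_add : ∀ (X : V) (a b : F), vact X (a + b) = vact X a + vact X b
  vact_mul : ∀ (X : V) (a b : F), vact X (a * b) = vact X a * b + a * vact X b
  vact_const : ∀ (X : V) (c : ℝ), vact X (algebraMap ℝ F c) = 0
  bracket_act : ∀ (X Y : V) (f : F),
    vact (bracket X Y) f = vact X (vact Y f) - vact Y (vact X f)
  R_def : ∀ X Y Z, R X Y Z = nabla X (nabla Y Z) - nabla Y (nabla X Z) - nabla (bracket X Y) Z
  Qstar_spec : ∀ X Y, g (Qstar X) Y = (1/2 : ℝ) • LinearMap.trace F V (phi ∘ₗ R X (phi Y))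

namespace NkContactMetric

variable {F : Type*} [CommRing F] [Algebra ℝ F]
  {V : Type*} [AddCommGroup V] [Module F V] [Module ℝ V] [IsScalarTower ℝ F V]
  {n : ℕ} {k : ℝ} (N : NkContactMetric F V n k)

/-- The contact form `η(X) = g(X, ξ)`. -/
def eta (X : V) : F := N.g X N.xi

/-- The `*`-Ricci tensor `S*(X,Y) = (1/2) trace (Z ↦ φ (R(X, φY) Z))`. -/
def Sstar (X Y : V) : F :=
  (1/2 : ℝ) • LinearMap.trace F V (N.phi ∘ₗ N.R X (N.phi Y))

/-- Lie derivative of the metric: `(£_W g)(X,Y)`. -/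
def lieg (W X Y : V) : F :=
  N.vact W (N.g X Y) - N.g (N.bracket W X) Y - N.g X (N.bracket W Y)

/-- Lie derivative of the Levi-Civita connection: `(£_W ∇)(X,Y)`. -/
def lieConn (W X Y : V) : V :=
  N.bracket W (N.nabla X Y) - N.nabla (N.bracket W X) Y - N.nabla X (N.bracket W Y)

/-- Covariant derivative of `£_W ∇`: `(∇_Y (£_W ∇))(X, Z)`. -/
def nablaLieConn (W Y X Z : V) : V :=
  N.nabla Y (N.lieConn W X Z) - N.lieConn W (N.nabla Y X) Z - N.lieConn W X (N.nabla Y Z)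

/-- Lie derivative of the curvature tensor: `(£_W R)(X,Y)Z`. -/
def lieR (W X Y Z : V) : V :=
  N.bracket W (N.R X Y Z) - N.R (N.bracket W X) Y Z - N.R X (N.bracket W Y) Z
    - N.R X Y (N.bracket W Z)

/-- Covariant derivative of the `*`-Ricci tensor: `(∇_Z S*)(X,Y)`. -/
def nablaSstar (Z X Y : V) : F :=
  N.vact Z (N.Sstar X Y) - N.Sstar (N.nabla Z X) Y - N.Sstar X (N.nabla Z Y)

/-- Covariant derivative of the `*`-Ricci operator: `(∇_X Q*) Y`. -/
def nablaQstar (X Y : V) : V :=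
  N.nabla X (N.Qstar Y) - N.Qstar (N.nabla X Y)

/-- The `(1,1)`-tensor field `X ↦ ∇_X W` as an `F`-linear map. -/
def hessOp (W : V) : V →ₗ[F] V where
  toFun X := N.nabla X W
  map_add' X Y := N.nabla_add₁ X Y W
  map_smul' f X := N.nabla_smul₁ f X W

/-- The Laplacian `Δf = trace (X ↦ ∇_X (Df))`, expressed through the gradient `Df`. -/
def lap (Df : V) : F := LinearMap.trace F V (N.hessOp Df)

/-- `M` admits a `*`-conformal Ricci soliton `(g, W, λ)`:
`£_W g + 2 S* = [2λ - (p + 2/(2n+1))] g`. -/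
def IsStarConformalRicciSoliton (W : V) (lam p : ℝ) : Prop :=
  ∀ X Y, N.lieg W X Y + (2 : ℝ) • N.Sstar X Y =
    (2 * lam - (p + 2 / (2 * (n : ℝ) + 1))) • N.g X Y

/-- `M` admits a `*`-conformal gradient Ricci soliton with potential function `f` whose
gradient is `Df` (i.e. `g(Df, X) = X f`): `∇²f + S* = [λ - (p/2 + 1/(2n+1))] g`, where
`(∇²f)(X,Y) = g(∇_X Df, Y)`. -/
def IsStarConformalGradientRicciSoliton (f : F) (Df : V) (lam p : ℝ) : Prop :=
  (∀ X, N.g Df X = N.vact X f) ∧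
  ∀ X Y, N.g (N.nabla X Df) Y + N.Sstar X Y =
    (lam - (p / 2 + 1 / (2 * (n : ℝ) + 1))) • N.g X Y

end NkContactMetric

end

/-- If a `(2n+1)`-dimensional `N(k)`-contact metric manifold admits a
`*`-conformal Ricci soliton `(g, W, λ)`, then `η(£_W ξ) = -[λ - (p/2 + 1/(2n+1))]`. -/
theorem nk_contact_starConformalRicciSoliton_eta_lie_xi {F : Type*} [CommRing F] [Algebra ℝ F] [Nontrivial F]
    {V : Type*} [AddCommGroup V] [Module F V] [Module ℝ V] [IsScalarTower ℝ F V]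
    {n : ℕ} {k : ℝ} (N : NkContactMetric F V n k)
    (W : V) (lam p : ℝ)
    (hsol : N.IsStarConformalRicciSoliton W lam p) :
    N.eta (N.bracket W N.xi) =
      algebraMap ℝ F (-(lam - (p / 2 + 1 / (2 * (n : ℝ) + 1)))) := by
  -- Preliminaries
  have vact_zero : ∀ X : V, N.vact X (0 : F) = 0 := by
    intro X
    have := N.vact_const X 0
    simpa using this
  have vact_one : ∀ X : V, N.vact X (1 : F) = 0 := by
    intro X
    have := N.vact_const X 1
    simpa using this
  have nabla_zero₂ : ∀ X : V, N.nabla X (0 : V) = 0 := by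
    intro X
    have h := N.nabla_leibniz X (0 : F) 0
    simpa [vact_zero X] using h
  have nabla_zero₁ : ∀ Z : V, N.nabla (0 : V) Z = 0 := by
    intro Z
    have h := N.nabla_smul₁ (0 : F) 0 Z
    simpa using h
  have bracket_xi_zero : N.bracket N.xi (0 : V) = 0 := by
    have h := N.torsion_free N.xi (0 : V)
    rw [nabla_zero₂, nabla_zero₁] at h
    simpa using h.symm
  -- S*(ξ,ξ) = 0
  have Rzero : N.R N.xi (N.phi N.xi) = 0 := by
    rw [N.phi_xi]
    ext Z
    simp [N.R_def, nabla_zero₁, nabla_zero₂, bracket_xi_zero]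
  have Sstar_xi : N.Sstar N.xi N.xi = 0 := by
    unfold NkContactMetric.Sstar
    rw [Rzero]
    simp
  -- lieg W ξ ξ
  have hlieg : N.lieg W N.xi N.xi = - ((2:ℝ) • N.eta (N.bracket W N.xi)) := by
    unfold NkContactMetric.lieg NkContactMetric.eta
    rw [N.xi_unit, vact_one, N.g_symm N.xi (N.bracket W N.xi)]
    rw [two_smul]
    ring
  have hs := hsol N.xi N.xi
  rw [hlieg, Sstar_xi, N.xi_unit, smul_zero, add_zero] at hs
  -- hs : -((2:ℝ) • η) = c • 1
  have heta : N.eta (N.bracket W N.xi) =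
      (-(lam - (p / 2 + 1 / (2 * (n : ℝ) + 1)))) • (1 : F) := by
    have h1 : N.eta (N.bracket W N.xi)
        = (-(1/2) : ℝ) • (-((2:ℝ) • N.eta (N.bracket W N.xi))) := by
      rw [smul_neg, smul_smul]; norm_num
    rw [h1, hs, smul_smul]
    congr 1
    ring
  rw [heta, Algebra.smul_def, mul_one]
end

section
/- Let M be a (2n+1)-dimensional N(k)-contact metric manifold admitting a *-conformal Ricci soliton (g,V,λ) with k ≠ 0 and λ = p/2 + 1/(2n+1). Then η(£_V ξ) = 0, i.e., £_V ξ is orthogonal to ξ; consequently V cannot be a (non-strict) infinitesimal contact transformation, i.e., there is no nowhere-zero smooth function f with £_V ξ = fξ. -/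
/-- If a `(2n+1)`-dimensional `N(k)`-contact metric manifold admits a
`*`-conformal Ricci soliton `(g, W, λ)` with `k ≠ 0` and `λ = p/2 + 1/(2n+1)`, then
`η(£_W ξ) = 0` (so `£_W ξ ⊥ ξ`), and consequently `W` cannot be a non-strict infinitesimal
contact transformation: there is no nowhere-vanishing (i.e. invertible) smooth function `f`
with `£_W ξ = f ξ`. -/
theorem nk_contact_starConformalRicciSoliton_not_contactTransformation {F : Type*} [CommRing F] [Algebra ℝ F] [Nontrivial F]
    {V : Type*} [AddCommGroup V] [Module F V] [Module ℝ V] [IsScalarTower ℝ F V]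
    {n : ℕ} {k : ℝ} (N : NkContactMetric F V n k)
    (W : V) (lam p : ℝ)
    (hsol : N.IsStarConformalRicciSoliton W lam p)
    (hk : k ≠ 0) (hlam : lam = p / 2 + 1 / (2 * (n : ℝ) + 1)) :
    N.eta (N.bracket W N.xi) = 0 ∧
      ¬ ∃ f : F, IsUnit f ∧ N.bracket W N.xi = f • N.xi := by
  -- basic facts about ∇ and the bracket
  have hn0r : ∀ X : V, N.nabla X 0 = 0 := by
    intro X
    have h := N.nabla_add₂ X 0 0
    rw [add_zero] at h
    exact (add_eq_left.mp h.symm)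
  have hn0l : ∀ X : V, N.nabla 0 X = 0 := by
    intro X
    have h := N.nabla_smul₁ (0 : F) X X
    rw [zero_smul, zero_smul] at h
    exact h
  have hb0 : N.bracket N.xi 0 = 0 := by
    have h := N.torsion_free N.xi 0
    rw [hn0r, hn0l, sub_zero] at h
    exact h.symm
  -- S*(ξ,ξ) = 0
  have hR0 : (N.phi ∘ₗ N.R N.xi (N.phi N.xi)) = 0 := by
    rw [N.phi_xi]
    ext Z
    simp only [LinearMap.comp_apply, LinearMap.zero_apply]
    rw [N.R_def]
    simp [hn0l, hn0r, hb0]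
  have hS : N.Sstar N.xi N.xi = 0 := by
    unfold NkContactMetric.Sstar
    rw [hR0, map_zero, smul_zero]
  -- the soliton coefficient vanishes
  have hc : (2 * lam - (p + 2 / (2 * (n : ℝ) + 1))) = 0 := by
    rw [hlam]; ring
  have hsolxx := hsol N.xi N.xi
  rw [hc, zero_smul, hS, smul_zero, add_zero] at hsolxx
  -- expand the Lie derivative of g at (ξ,ξ)
  have hone : N.vact W (N.g N.xi N.xi) = 0 := by
    rw [N.xi_unit, ← map_one (algebraMap ℝ F)]
    exact N.vact_const W 1
  unfold NkContactMetric.lieg at hsolxx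
  rw [hone, N.g_symm N.xi (N.bracket W N.xi), zero_sub] at hsolxx
  have hsum : N.g (N.bracket W N.xi) N.xi + N.g (N.bracket W N.xi) N.xi = 0 := by
    have := congrArg Neg.neg hsolxx
    simp only [neg_sub, neg_zero] at this
    linear_combination this
  have heta : N.eta (N.bracket W N.xi) = 0 := by
    have h2 : ((1:ℝ)/2) • (N.g (N.bracket W N.xi) N.xi + N.g (N.bracket W N.xi) N.xi)
        = N.g (N.bracket W N.xi) N.xi := by
      rw [smul_add, ← add_smul]
      norm_num
    unfold NkContactMetric.eta
    rw [← h2, hsum, smul_zero]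
  refine ⟨heta, ?_⟩
  rintro ⟨f, hf, hbr⟩
  have : N.eta (N.bracket W N.xi) = f := by
    unfold NkContactMetric.eta
    rw [hbr, map_smul, LinearMap.smul_apply, smul_eq_mul, N.xi_unit, mul_one]
  rw [heta] at this
  exact hf.ne_zero this.symm
end
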